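/- Let g be a finite-dimensional complex Lie algebra with a nondegenerate symmetric invariant bilinear form ⟨·,·⟩, dual bases X¹,…,X^d and X₁,…,X_d, a finite-dimensional representation π : g → End V, and G = Σ_{i=1}^d π(Xⁱ) ⊗ X_i ∈ End V ⊗ U(g). Then for every k ≥ 1 the element tr G^k (trace over the End V factor) belongs to the center of the universal enveloping algebra U(g). -/

import Mathlib

/-!
Put `Ω = Σᵢ Xⁱ ⊗ Xᵢ ∈ g ⊗ g`. Invariance of the form makes `Ω` invariant under the adjoint
action, and `G` is the image of `Ω` under `π ⊗ ι`, so `G`, hence `G^k`, commutes with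
`Δ(Y) = π(Y) ⊗ 1 + 1 ⊗ Y` for every `Y ∈ g`. Taking the partial trace of `Δ(Y) G^k = G^k Δ(Y)`,
the contributions of `π(Y) ⊗ 1` agree by cyclicity of the trace, leaving `Y tr G^k = tr G^k Y`;
as `g` generates `U(g)`, `tr G^k` is central.
-/

noncomputable section

set_option maxHeartbeats 1000000

open scoped TensorProduct

attribute [local instance] LieRing.ofAssociativeRing

/-- `G = Σᵢ π(Xⁱ) ⊗ Xᵢ ∈ End V ⊗ U(g)`. -/
def Ggen (L : Type) [LieRing L] [LieAlgebra ℂ L]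
    (V : Type) [AddCommGroup V] [Module ℂ V]
    (π : L →ₗ⁅ℂ⁆ Module.End ℂ V) (d : ℕ) (bX : Fin d → L) (Xlo : Fin d → L) :
    Module.End ℂ V ⊗[ℂ] UniversalEnvelopingAlgebra ℂ L :=
  ∑ i : Fin d, π (bX i) ⊗ₜ[ℂ] UniversalEnvelopingAlgebra.ι ℂ (Xlo i)

/-- The trace over the `End V` factor, `End V ⊗ U(g) → U(g)`. -/
def trFirst (L : Type) [LieRing L] [LieAlgebra ℂ L]
    (V : Type) [AddCommGroup V] [Module ℂ V]
    (x : Module.End ℂ V ⊗[ℂ] UniversalEnvelopingAlgebra ℂ L) :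
    UniversalEnvelopingAlgebra ℂ L :=
  TensorProduct.lid ℂ (UniversalEnvelopingAlgebra ℂ L)
    (LinearMap.rTensor (UniversalEnvelopingAlgebra ℂ L)
      ((LinearMap.trace ℂ V : Module.End ℂ V →ₗ[ℂ] ℂ)) x)

open TensorProduct

namespace LinearMap.BilinForm

variable {R M ι : Type*} [CommRing R] [AddCommGroup M] [Module R M] [DecidableEq ι]
  {B : LinearMap.BilinForm R M} {b : Module.Basis ι R M} {c : ι → M}

theorem apply_dual_eq_repr (hdual : ∀ i j, B (b i) (c j) = if i = j then 1 else 0)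
    (x : M) (i : ι) : B x (c i) = b.repr x i := by
  have : B.flip (c i) = b.coord i := b.ext fun j => by simp [hdual, Finsupp.single_apply]
  simpa using LinearMap.congr_fun this x

theorem sum_apply_dual_smul [Fintype ι]
    (hdual : ∀ i j, B (b i) (c j) = if i = j then 1 else 0) (x : M) : ∑ i, B x (c i) • b i = x := by
  simp_rw [apply_dual_eq_repr hdual]
  exact b.sum_repr x

theorem sum_apply_basis_smul_dual [Fintype ι]
    (hdual : ∀ i j, B (b i) (c j) = if i = j then 1 else 0)
    (hB : B.SeparatingRight) (x : M) : ∑ i, B (b i) x • c i = x := by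
  refine (sub_eq_zero.mp (hB _ fun y => ?_)).symm
  suffices B.flip (x - ∑ i, B (b i) x • c i) = 0 from LinearMap.congr_fun this y
  refine b.ext fun i => ?_
  simp [hdual]

theorem sum_apply_tmul_add_sum_tmul_apply_eq_zero [Fintype ι]
    (hdual : ∀ i j, B (b i) (c j) = if i = j then 1 else 0)
    (hB : B.SeparatingRight) (f : M →ₗ[R] M) (hf : ∀ x y, B (f x) y = -B x (f y)) :
    ∑ i, f (b i) ⊗ₜ[R] c i + ∑ i, b i ⊗ₜ[R] f (c i) = 0 := by
  refine add_eq_zero_iff_eq_neg'.mpr ?_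
  calc ∑ i, b i ⊗ₜ[R] f (c i)
      = ∑ i, b i ⊗ₜ[R] ∑ j, (-B (f (b j)) (c i)) • c j := by
        refine Finset.sum_congr rfl fun i _ => ?_
        conv_lhs => rw [← sum_apply_basis_smul_dual hdual hB (f (c i))]
        simp only [hf, neg_neg]
    _ = ∑ j, (∑ i, (-B (f (b j)) (c i)) • b i) ⊗ₜ[R] c j := by
        simp only [tmul_sum, sum_tmul, smul_tmul]
        exact Finset.sum_comm
    _ = -∑ j, f (b j) ⊗ₜ[R] c j := by
        simp only [neg_smul, Finset.sum_neg_distrib, neg_tmul, sum_apply_dual_smul hdual]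

end LinearMap.BilinForm

theorem LinearMap.BilinForm.lie_sum_tmul_dual_eq_zero {R L ι : Type*} [CommRing R] [LieRing L]
    [LieAlgebra R L] [Fintype ι] [DecidableEq ι] {B : LinearMap.BilinForm R L}
    (hinv : ∀ X Y Z : L, B ⁅X, Y⁆ Z = B X ⁅Y, Z⁆) (hB : B.SeparatingRight)
    {b : Module.Basis ι R L} {c : ι → L}
    (hdual : ∀ i j, B (b i) (c j) = if i = j then 1 else 0) (Y : L) :
    ⁅Y, ∑ i, b i ⊗ₜ[R] c i⁆ = 0 := by
  have hskew : ∀ x z : L, B ⁅Y, x⁆ z = -B x ⁅Y, z⁆ := fun x z => by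
    rw [← lie_skew, map_neg, LinearMap.neg_apply, hinv]
  simpa only [lie_sum, LieModule.lie_tmul_right, Finset.sum_add_distrib,
    LieAlgebra.ad_apply] using
    sum_apply_tmul_add_sum_tmul_apply_eq_zero hdual hB (LieAlgebra.ad R L Y) hskew

theorem TensorProduct.lie_tmul_one_add_one_tmul_map {R L A A' : Type*} [CommRing R] [LieRing L]
    [LieAlgebra R L] [Ring A] [Algebra R A] [Ring A'] [Algebra R A']
    (f : L →ₗ⁅R⁆ A) (g : L →ₗ⁅R⁆ A') (Y : L) (t : L ⊗[R] L) :
    ⁅f Y ⊗ₜ[R] (1 : A') + (1 : A) ⊗ₜ[R] g Y, map (f : L →ₗ[R] A) (g : L →ₗ[R] A') t⁆ =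
      map (f : L →ₗ[R] A) (g : L →ₗ[R] A') ⁅Y, t⁆ := by
  induction t using TensorProduct.induction_on with
  | zero => simp
  | tmul x y =>
    simp only [map_tmul, LieModule.lie_tmul_right, Ring.lie_def, LieHom.coe_toLinearMap,
      LieHom.map_lie, add_mul, mul_add, Algebra.TensorProduct.tmul_mul_tmul, one_mul, mul_one,
      sub_tmul, tmul_sub, map_add]
    abel
  | add t t' ht ht' => simp only [map_add, lie_add, ht, ht']

namespace UniversalEnvelopingAlgebra

variable {R L : Type*} [CommRing R] [LieRing L] [LieAlgebra R L]

theorem adjoin_range_ι : Algebra.adjoin R (Set.range (ι R (L := L))) = ⊤ := by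
  have hι : Set.range (ι R (L := L)) = mkAlgHom R L '' Set.range (TensorAlgebra.ι R) := by
    rw [← Set.range_comp]; rfl
  rw [hι, Algebra.adjoin_image, TensorAlgebra.adjoin_range_ι, Algebra.map_top,
    AlgHom.range_eq_top]
  exact RingCon.mkₐ_surjective _

theorem mem_center_of_forall_commute_ι {x : UniversalEnvelopingAlgebra R L}
    (h : ∀ Y : L, Commute (ι R Y) x) :
    x ∈ Subalgebra.center R (UniversalEnvelopingAlgebra R L) := by
  rw [Subalgebra.mem_center_iff]
  intro u
  have hu : u ∈ Subalgebra.centralizer R (Set.centralizer (Set.range (ι R (L := L)))) :=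
    Algebra.adjoin_le_centralizer_centralizer R (Set.range (ι R (L := L)))
      (by rw [adjoin_range_ι]; exact Algebra.mem_top)
  exact (hu x (by rintro _ ⟨Y, rfl⟩; exact (h Y).eq)).symm

end UniversalEnvelopingAlgebra

section PartialTrace

variable {L : Type} [LieRing L] [LieAlgebra ℂ L] {V : Type} [AddCommGroup V] [Module ℂ V]

@[simp]
theorem trFirst_tmul (a : Module.End ℂ V) (u : UniversalEnvelopingAlgebra ℂ L) :
    trFirst L V (a ⊗ₜ u) = LinearMap.trace ℂ V a • u := by
  simp [trFirst]

theorem trFirst_add (x y : Module.End ℂ V ⊗[ℂ] UniversalEnvelopingAlgebra ℂ L) :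
    trFirst L V (x + y) = trFirst L V x + trFirst L V y := by
  simp [trFirst]

theorem trFirst_tmul_one_mul_comm (a : Module.End ℂ V)
    (x : Module.End ℂ V ⊗[ℂ] UniversalEnvelopingAlgebra ℂ L) :
    trFirst L V (a ⊗ₜ 1 * x) = trFirst L V (x * a ⊗ₜ 1) := by
  induction x using TensorProduct.induction_on with
  | zero => simp
  | tmul b u => simp [LinearMap.trace_mul_comm ℂ a b]
  | add x y hx hy => rw [mul_add, add_mul, trFirst_add, trFirst_add, hx, hy]

theorem trFirst_one_tmul_mul (u : UniversalEnvelopingAlgebra ℂ L)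
    (x : Module.End ℂ V ⊗[ℂ] UniversalEnvelopingAlgebra ℂ L) :
    trFirst L V (1 ⊗ₜ u * x) = u * trFirst L V x := by
  induction x using TensorProduct.induction_on with
  | zero => simp [trFirst]
  | tmul b v => simp
  | add x y hx hy => rw [mul_add, trFirst_add, trFirst_add, hx, hy, mul_add]

theorem trFirst_mul_one_tmul (u : UniversalEnvelopingAlgebra ℂ L)
    (x : Module.End ℂ V ⊗[ℂ] UniversalEnvelopingAlgebra ℂ L) :
    trFirst L V (x * 1 ⊗ₜ u) = trFirst L V x * u := by
  induction x using TensorProduct.induction_on with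
  | zero => simp [trFirst]
  | tmul b v => simp
  | add x y hx hy => rw [add_mul, trFirst_add, trFirst_add, hx, hy, add_mul]

theorem commute_trFirst_of_commute {a : Module.End ℂ V} {u : UniversalEnvelopingAlgebra ℂ L}
    {x : Module.End ℂ V ⊗[ℂ] UniversalEnvelopingAlgebra ℂ L} (h : Commute (a ⊗ₜ 1 + 1 ⊗ₜ u) x) :
    Commute u (trFirst L V x) := by
  have := congrArg (trFirst L V) h.eq
  rwa [add_mul, mul_add, trFirst_add, trFirst_add, trFirst_tmul_one_mul_comm,
    trFirst_one_tmul_mul, trFirst_mul_one_tmul, add_left_cancel_iff] at this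

end PartialTrace

theorem trace_powers_central_general
    (L : Type) [LieRing L] [LieAlgebra ℂ L]
    (V : Type) [AddCommGroup V] [Module ℂ V]
    (B : LinearMap.BilinForm ℂ L)
    (hinv : ∀ X Y Z : L, B ⁅X, Y⁆ Z = B X ⁅Y, Z⁆)
    (hnd : B.Nondegenerate)
    (d : ℕ) (bX : Module.Basis (Fin d) ℂ L) (Xlo : Fin d → L)
    (hdual : ∀ i j, B (bX i) (Xlo j) = if i = j then 1 else 0)
    (π : L →ₗ⁅ℂ⁆ Module.End ℂ V) :
    ∀ k : ℕ, 1 ≤ k →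
      trFirst L V ((Ggen L V π d bX Xlo) ^ k) ∈
        Subalgebra.center ℂ (UniversalEnvelopingAlgebra ℂ L) := by
  intro k _
  have hG : Ggen L V π d bX Xlo =
      map (π : L →ₗ[ℂ] Module.End ℂ V)
        ((UniversalEnvelopingAlgebra.ι ℂ : L →ₗ⁅ℂ⁆ UniversalEnvelopingAlgebra ℂ L) : L →ₗ[ℂ] _)
        (∑ i, bX i ⊗ₜ Xlo i) := by
    simp [Ggen]
  refine UniversalEnvelopingAlgebra.mem_center_of_forall_commute_ι fun Y =>
    commute_trFirst_of_commute (a := π Y) (Commute.pow_right ?_ k)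
  rw [commute_iff_lie_eq, hG, TensorProduct.lie_tmul_one_add_one_tmul_map,
    LinearMap.BilinForm.lie_sum_tmul_dual_eq_zero hinv hnd.2 hdual, map_zero]

/-- for a finite-dimensional complex Lie algebra `g` with a nondegenerate
symmetric invariant bilinear form, dual bases `X¹,…,X^d`, `X₁,…,X_d`, and a
finite-dimensional representation `π : g → End V`, all the elements `tr G^k`, `k ≥ 1`,
belong to the center of `U(g)`. -/
theorem trace_powers_central
    (L : Type) [LieRing L] [LieAlgebra ℂ L] [Module.Finite ℂ L]
    (V : Type) [AddCommGroup V] [Module ℂ V] [Module.Finite ℂ V]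
    (B : LinearMap.BilinForm ℂ L)
    (hsym : ∀ X Y : L, B X Y = B Y X)
    (hinv : ∀ X Y Z : L, B ⁅X, Y⁆ Z = B X ⁅Y, Z⁆)
    (hnd : B.Nondegenerate)
    (d : ℕ) (bX : Module.Basis (Fin d) ℂ L) (Xlo : Fin d → L)
    (hdual : ∀ i j, B (bX i) (Xlo j) = if i = j then 1 else 0)
    (π : L →ₗ⁅ℂ⁆ Module.End ℂ V) :
    ∀ k : ℕ, 1 ≤ k →
      trFirst L V ((Ggen L V π d bX Xlo) ^ k) ∈
        Subalgebra.center ℂ (UniversalEnvelopingAlgebra ℂ L) :=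
  trace_powers_central_general L V B hinv hnd d bX Xlo hdual π
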